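/- arXiv:1605.00592 — 2 statements merged into one kernel-verified Lean document; each statement's English description precedes it below -/
import Mathlib

section
/- Let A be an associative unital ℂ-algebra with an exhaustive increasing filtration F_0 ⊆ F_1 ⊆ ⋯ (F_m = 0 for m < 0, 1 ∈ F_0, F_i·F_j ⊆ F_{i+j}) and d ≥ 1 with [F_i,F_j] ⊆ F_{i+j−d}, and equip gr A with the induced commutative product and degree −d Poisson bracket coming from the commutator. Assume that every homogeneous Poisson derivation of gr A of negative degree is zero (i.e., every ℂ-linear map D : gr A → gr A that is homogeneous of degree −k for some k ≥ 1 and satisfies D(ab) = D(a)b + aD(b) and D{a,b} = {Da,b} + {a,Db} vanishes). Then every algebra automorphism φ of A with φ(F_i) = F_i for all i that induces the identity map on gr A is the identity. -/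
/-- Let `A` be a filtered associative unital `ℂ`-algebra (filtration
`F : ℤ → Submodule ℂ A`, `F m = 0` for `m < 0`, `1 ∈ F 0`, `F i * F j ⊆ F (i+j)`,
`[F i, F j] ⊆ F (i+j-d)` for a fixed `d ≥ 1`).  Assume that every homogeneous Poisson
derivation of negative degree `-k` (`k ≥ 1`) of the associated graded Poisson algebra `gr A`
vanishes; such a derivation is encoded by a family of linear maps `δ i : A → A`
that sends `F i` into `F (i-k)`, is well defined on `gr A`, and satisfies the Leibniz rule
and the Poisson (bracket) derivation rule modulo lower filtration degree, and it vanishes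
on `gr A` exactly when `δ i (F i) ⊆ F (i-k-1)`.  Then every algebra automorphism `φ` of `A`
preserving the filtration and inducing the identity on `gr A` is the identity. -/
theorem filtered_automorphism_trivial_on_gr_is_id
    (A : Type*) [Ring A] [Algebra ℂ A]
    (F : ℤ → Submodule ℂ A) (hmono : Monotone F)
    (hneg : ∀ m : ℤ, m < 0 → F m = ⊥)
    (hexh : ∀ a : A, ∃ i, a ∈ F i)
    (hone : (1 : A) ∈ F 0)
    (hmul : ∀ i j : ℤ, ∀ a ∈ F i, ∀ b ∈ F j, a * b ∈ F (i + j))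
    (d : ℤ) (hd : 1 ≤ d)
    (hbr : ∀ i j : ℤ, ∀ a ∈ F i, ∀ b ∈ F j, a * b - b * a ∈ F (i + j - d))
    -- every homogeneous Poisson derivation of `gr A` of negative degree is zero:
    (hder : ∀ k : ℤ, 1 ≤ k → ∀ δ : ℤ → A →ₗ[ℂ] A,
      (∀ i : ℤ, ∀ a ∈ F i, δ i a ∈ F (i - k)) →
      (∀ i : ℤ, ∀ a ∈ F (i - 1), δ i a - δ (i - 1) a ∈ F (i - k - 1)) →
      (∀ i j : ℤ, ∀ a ∈ F i, ∀ b ∈ F j,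
        δ (i + j) (a * b) - (a * δ j b + δ i a * b) ∈ F (i + j - k - 1)) →
      (∀ i j : ℤ, ∀ a ∈ F i, ∀ b ∈ F j,
        δ (i + j - d) (a * b - b * a)
          - ((δ i a * b - b * δ i a) + (a * δ j b - δ j b * a)) ∈ F (i + j - d - k - 1)) →
      ∀ i : ℤ, ∀ a ∈ F i, δ i a ∈ F (i - k - 1))
    (φ : A ≃ₐ[ℂ] A)
    (hφF : ∀ i : ℤ, ∀ a : A, a ∈ F i ↔ φ a ∈ F i)
    (hgr : ∀ i : ℤ, ∀ a ∈ F i, φ a - a ∈ F (i - 1)) :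
    ∀ a : A, φ a = a := by
  have hFle : ∀ (i j : ℤ), ∀ a ∈ F i, i ≤ j → a ∈ F j :=
    fun i j a ha hij => hmono hij ha
  -- Key induction: for all n, φ a - a ∈ F (i - 1 - n) for a ∈ F i.
  have key : ∀ n : ℕ, ∀ i : ℤ, ∀ a ∈ F i, φ a - a ∈ F (i - 1 - n) := by
    intro n
    induction n with
    | zero => simpa using hgr
    | succ n ih =>
      intro i a ha
      set k : ℤ := (n : ℤ) + 1 with hkdef
      have hk : 1 ≤ k := by omega
      have ih' : ∀ i : ℤ, ∀ a ∈ F i, φ a - a ∈ F (i - k) := by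
        intro i a ha
        exact hFle _ _ _ (ih i a ha) (by omega)
      have h := hder k hk (fun _ => φ.toLinearMap - LinearMap.id)
        (by
          intro i a ha
          simpa using ih' i a ha)
        (by
          intro i a _
          simp)
        (by
          intro i j a ha b hb
          have e : (φ.toLinearMap - LinearMap.id : A →ₗ[ℂ] A) (a * b)
              - (a * (φ.toLinearMap - LinearMap.id : A →ₗ[ℂ] A) b
                 + (φ.toLinearMap - LinearMap.id : A →ₗ[ℂ] A) a * b)
              = (φ a - a) * (φ b - b) := by
            simp only [LinearMap.sub_apply, LinearMap.id_apply,
              AlgEquiv.toLinearMap_apply, map_mul]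
            noncomm_ring
          rw [e]
          exact hFle _ _ _
            (hmul (i - k) (j - k) _ (ih' i a ha) _ (ih' j b hb)) (by omega))
        (by
          intro i j a ha b hb
          have e : (φ.toLinearMap - LinearMap.id : A →ₗ[ℂ] A) (a * b - b * a)
              - (((φ.toLinearMap - LinearMap.id : A →ₗ[ℂ] A) a * b
                    - b * (φ.toLinearMap - LinearMap.id : A →ₗ[ℂ] A) a)
                 + (a * (φ.toLinearMap - LinearMap.id : A →ₗ[ℂ] A) b
                    - (φ.toLinearMap - LinearMap.id : A →ₗ[ℂ] A) b * a))
              = (φ a - a) * (φ b - b) - (φ b - b) * (φ a - a) := by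
            simp only [LinearMap.sub_apply, LinearMap.id_apply,
              AlgEquiv.toLinearMap_apply, map_mul, map_sub]
            noncomm_ring
          rw [e]
          exact hFle _ _ _
            (hbr (i - k) (j - k) _ (ih' i a ha) _ (ih' j b hb)) (by omega))
        i a ha
      simp only [LinearMap.sub_apply, LinearMap.id_apply,
        AlgEquiv.toLinearMap_apply] at h
      exact hFle _ _ _ h (by omega)
  intro a
  obtain ⟨i, hi⟩ := hexh a
  have h1 : φ a - a ∈ F (i - 1 - (i.toNat : ℤ)) := key i.toNat i a hi
  rw [hneg _ (by omega)] at h1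
  have : φ a - a = 0 := by simpa using h1
  exact sub_eq_zero.mp this
end

section
/- Let A be a commutative unital ℂ-algebra with an exhaustive increasing filtration F_0 ⊆ F_1 ⊆ ⋯ (F_m = 0 for m < 0, 1 ∈ F_0, F_i·F_j ⊆ F_{i+j}) carrying a Poisson bracket {·,·} (ℂ-bilinear, antisymmetric, satisfying Jacobi and Leibniz identities) with {F_i,F_j} ⊆ F_{i+j−d} for a fixed integer d ≥ 1, and equip the associated graded gr A with the induced graded Poisson structure of degree −d. Assume every homogeneous Poisson derivation of gr A of negative degree is zero. Then every Poisson algebra automorphism φ of A with φ(F_i) = F_i for all i that induces the identity on gr A is the identity. -/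
/-- Let `A` be a commutative unital `ℂ`-algebra with an exhaustive increasing
filtration `F : ℤ → Submodule ℂ A` (`F m = 0` for `m < 0`, `1 ∈ F 0`, `F i * F j ⊆ F (i+j)`),
carrying a Poisson bracket (bilinear, antisymmetric, Jacobi, Leibniz) with
`{F i, F j} ⊆ F (i+j-d)` for a fixed `d ≥ 1`.  Assume that every homogeneous Poisson
derivation of negative degree of the associated graded Poisson algebra `gr A` vanishes
(encoded by families of linear maps as below).  Then every Poisson algebra automorphism of
`A` preserving the filtration and inducing the identity on `gr A` is the identity. -/
theorem filtered_poisson_automorphism_trivial_on_gr_is_id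
    (A : Type*) [CommRing A] [Algebra ℂ A]
    (F : ℤ → Submodule ℂ A) (hmono : Monotone F)
    (hneg : ∀ m : ℤ, m < 0 → F m = ⊥)
    (hexh : ∀ a : A, ∃ i, a ∈ F i)
    (hone : (1 : A) ∈ F 0)
    (hmul : ∀ i j : ℤ, ∀ a ∈ F i, ∀ b ∈ F j, a * b ∈ F (i + j))
    (br : A →ₗ[ℂ] A →ₗ[ℂ] A)
    (hskew : ∀ a b : A, br a b = - br b a)
    (hjac : ∀ a b c : A, br (br a b) c + br (br b c) a + br (br c a) b = 0)
    (hleib : ∀ a b c : A, br (a * b) c = a * br b c + br a c * b)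
    (d : ℤ) (hd : 1 ≤ d)
    (hbr : ∀ i j : ℤ, ∀ a ∈ F i, ∀ b ∈ F j, br a b ∈ F (i + j - d))
    -- every homogeneous Poisson derivation of `gr A` of negative degree is zero:
    (hder : ∀ k : ℤ, 1 ≤ k → ∀ δ : ℤ → A →ₗ[ℂ] A,
      (∀ i : ℤ, ∀ a ∈ F i, δ i a ∈ F (i - k)) →
      (∀ i : ℤ, ∀ a ∈ F (i - 1), δ i a - δ (i - 1) a ∈ F (i - k - 1)) →
      (∀ i j : ℤ, ∀ a ∈ F i, ∀ b ∈ F j,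
        δ (i + j) (a * b) - (a * δ j b + δ i a * b) ∈ F (i + j - k - 1)) →
      (∀ i j : ℤ, ∀ a ∈ F i, ∀ b ∈ F j,
        δ (i + j - d) (br a b) - (br (δ i a) b + br a (δ j b)) ∈ F (i + j - d - k - 1)) →
      ∀ i : ℤ, ∀ a ∈ F i, δ i a ∈ F (i - k - 1))
    (φ : A ≃ₐ[ℂ] A)
    (hφbr : ∀ a b : A, φ (br a b) = br (φ a) (φ b))
    (hφF : ∀ i : ℤ, ∀ a : A, a ∈ F i ↔ φ a ∈ F i)
    (hgr : ∀ i : ℤ, ∀ a ∈ F i, φ a - a ∈ F (i - 1)) :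
    ∀ a : A, φ a = a := by
  set δ : ℤ → A →ₗ[ℂ] A := fun _ => φ.toLinearMap - LinearMap.id with hδ
  have hδa : ∀ i (a : A), δ i a = φ a - a := by intro i a; simp [hδ]
  have key : ∀ k : ℕ, ∀ i : ℤ, ∀ a ∈ F i, φ a - a ∈ F (i - (k + 1)) := by
    intro k
    induction k with
    | zero => intro i a ha; simpa using hgr i a ha
    | succ n ih =>
      intro i a ha
      have h1 : ∀ i : ℤ, ∀ a ∈ F i, δ i a ∈ F (i - (n + 1)) := by
        intro i a ha; rw [hδa i a]; exact ih i a ha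
      have h2 : ∀ i : ℤ, ∀ a ∈ F (i - 1), δ i a - δ (i - 1) a ∈ F (i - (n + 1) - 1) := by
        intro i a _
        rw [hδa i a, sub_self]
        exact zero_mem _
      have h3 : ∀ i j : ℤ, ∀ a ∈ F i, ∀ b ∈ F j,
          δ (i + j) (a * b) - (a * δ j b + δ i a * b) ∈ F (i + j - (n + 1) - 1) := by
        intro i j a ha b hb
        have hm := hmul (i - (n + 1)) (j - (n + 1)) _ (h1 i a ha) _ (h1 j b hb)
        have heq : δ (i + j) (a * b) - (a * δ j b + δ i a * b)
            = δ i a * δ j b := by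
          rw [hδa (i + j) (a * b), hδa i a, hδa j b, map_mul]; ring
        rw [heq]
        refine hmono ?_ hm
        omega
      have h4 : ∀ i j : ℤ, ∀ a ∈ F i, ∀ b ∈ F j,
          δ (i + j - d) (br a b) - (br (δ i a) b + br a (δ j b))
            ∈ F (i + j - d - (n + 1) - 1) := by
        intro i j a ha b hb
        have hm := hbr (i - (n + 1)) (j - (n + 1)) _ (h1 i a ha) _ (h1 j b hb)
        have heq : δ (i + j - d) (br a b) - (br (δ i a) b + br a (δ j b))
            = br (δ i a) (δ j b) := by
          rw [hδa (i + j - d) (br a b), hδa i a, hδa j b, hφbr]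
          simp only [map_sub, LinearMap.sub_apply]
          ring
        rw [heq]
        refine hmono ?_ hm
        omega
      have hres := hder (n + 1) (by omega) δ h1 h2 h3 h4 i a ha
      rw [hδa i a] at hres
      have e : i - ((n : ℤ) + 1) - 1 = i - (((n + 1 : ℕ) : ℤ) + 1) := by push_cast; ring
      rwa [e] at hres
  intro a
  obtain ⟨i, hi⟩ := hexh a
  have h := key i.toNat i a hi
  have hlt : i - (↑i.toNat + 1) < 0 := by
    have := Int.self_le_toNat i
    omega
  rw [hneg _ hlt, Submodule.mem_bot, sub_eq_zero] at h
  exact h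
end
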